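/- Let A be a k-algebra, σ a k-algebra automorphism of A, δ a σ-derivation, E = A[x;σ,δ], and n ≥ 0. For a k-linear map f: A^{⊗n} → A ⊗_k A, write f(a_1,…,a_n) = Σ f(a_1,…,a_n)' ⊗ f(a_1,…,a_n)'' and for l, k ≥ 0 define [f, x^l ⊗ x^k]: A^{⊗n} → E ⊗_k E by (a_1,…,a_n) ↦ Σ f(a_1,…,a_n)' x^l ⊗ x^k f(a_1,…,a_n)''. Define θ^n on k-linear maps F: A^{⊗n} → E ⊗_k E by θ^n(F)(a_1,…,a_n) = x▹F(σ⁻¹(a_1),…,σ⁻¹(a_n)) − F(a_1,…,a_n)◃x − Σ_{j=1}^{n} F(a_1,…,a_{j−1},δσ⁻¹(a_j),σ⁻¹(a_{j+1}),…,σ⁻¹(a_n)), where x▹(m⊗n) = xm⊗n and (m⊗n)◃x = m⊗nx. Then θ^n([f, x^l ⊗ x^k]) = [f_1, x^{l+1} ⊗ x^k] − [f_2, x^l ⊗ x^{k+1}] + [f_3, x^l ⊗ x^k], where f_1 = (σ⊗id)∘f∘(σ⁻¹)^{⊗n}, f_2 = (id⊗σ⁻¹)∘f, and f_3 = (δ⊗id)∘f∘(σ⁻¹)^{⊗n}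 + (id⊗δσ⁻¹)∘f − Σ_{j=1}^{n} f∘(id^{⊗(j−1)} ⊗ δσ⁻¹ ⊗ (σ⁻¹)^{⊗(n−j)}). -/

import Mathlib

open scoped TensorProduct
open CategoryTheory

noncomputable section
set_option synthInstance.maxHeartbeats 1000000
set_option maxHeartbeats 1000000

/-- `E` is an Ore extension `A[x; σ, δ]` of `A` (with `σ` an automorphism): `A` embeds in `E`
via `ι`, the powers of `x` form a basis of `E` as a left `A`-module, `x a = σ(a) x + δ(a)`,
and `δ` is a `σ`-derivation. -/
structure IsOreExtension (k : Type) [CommRing k] (A : Type) [Ring A] [Algebra k A]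
    (E : Type) [Ring E] [Algebra k E] (σ : A ≃ₐ[k] A) (δ : A →ₗ[k] A)
    (ι : A →ₐ[k] E) (x : E) : Prop where
  isDerivation : ∀ a b : A, δ (a * b) = δ a * b + σ a * δ b
  commRule : ∀ a : A, x * ι a = ι (σ a) * x + ι (δ a)
  spans : ∀ e : E, ∃ c : ℕ →₀ A, e = c.sum fun i a => ι a * x ^ i
  indep : ∀ c : ℕ →₀ A, (c.sum fun i a => ι a * x ^ i) = 0 → c = 0

section Stmt5

variable (k : Type) [CommRing k] (A : Type) [Ring A] [Algebra k A]
  (E : Type) [Ring E] [Algebra k E] (ι : A →ₐ[k] E) (x : E)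

/-- `a ↦ ι(a) · x^l`. -/
def toL (l : ℕ) : A →ₗ[k] E := (LinearMap.mulRight k (x ^ l)).comp ι.toLinearMap

/-- `a ↦ x^m · ι(a)`. -/
def toR (m : ℕ) : A →ₗ[k] E := (LinearMap.mulLeft k (x ^ m)).comp ι.toLinearMap

/-- `[f, x^l ⊗ x^m] : A^{⊗n} → E ⊗ E`, sending `a` to `Σ f(a)' x^l ⊗ x^m f(a)''`. -/
def bracket {n : ℕ} (f : TensorPower k n A →ₗ[k] A ⊗[k] A) (l m : ℕ) :
    TensorPower k n A →ₗ[k] E ⊗[k] E :=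
  (TensorProduct.map (toL k A E ι x l) (toR k A E ι x m)).comp f

/-! Every term on either side is the image of a value of `f` under a map `A ⊗ A → E ⊗ E`, so
the identity reduces to moving `x` across `ι` inside one tensor factor: in the left factor by
`x ι(b) = ι(σ b) x + ι(δ b)`, in the right one by the same rule read backwards,
`ι(c) x = x ι(σ⁻¹ c) − ι(δ σ⁻¹ c)`. -/

section CommutationRule

variable {k A E ι x} {σ : A ≃ₐ[k] A} {δ : A →ₗ[k] A}

theorem ι_mul_eq_of_commRule (hcomm : ∀ a : A, x * ι a = ι (σ a) * x + ι (δ a)) (c : A) :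
    ι c * x = x * ι (σ.symm c) - ι (δ (σ.symm c)) := by
  rw [hcomm, σ.apply_symm_apply, add_sub_cancel_right]

theorem mul_toL_of_commRule (hcomm : ∀ a : A, x * ι a = ι (σ a) * x + ι (δ a))
    (l : ℕ) (b : A) :
    x * toL k A E ι x l b = toL k A E ι x (l + 1) (σ b) + toL k A E ι x l (δ b) := by
  simp only [toL, LinearMap.comp_apply, LinearMap.mulRight_apply, AlgHom.toLinearMap_apply]
  rw [← mul_assoc, hcomm, add_mul, mul_assoc, ← pow_succ']

theorem toR_mul_of_commRule (hcomm : ∀ a : A, x * ι a = ι (σ a) * x + ι (δ a))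
    (m : ℕ) (c : A) :
    toR k A E ι x m c * x = toR k A E ι x (m + 1) (σ.symm c) - toR k A E ι x m (δ (σ.symm c)) := by
  simp only [toR, LinearMap.comp_apply, LinearMap.mulLeft_apply, AlgHom.toLinearMap_apply]
  rw [mul_assoc, ι_mul_eq_of_commRule hcomm, mul_sub, ← mul_assoc, ← pow_succ]

theorem map_mulLeft_map_toL_toR (hcomm : ∀ a : A, x * ι a = ι (σ a) * x + ι (δ a))
    (l m : ℕ) (t : A ⊗[k] A) :
    TensorProduct.map (LinearMap.mulLeft k x) LinearMap.id
        (TensorProduct.map (toL k A E ι x l) (toR k A E ι x m) t) =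
      TensorProduct.map (toL k A E ι x (l + 1)) (toR k A E ι x m)
          (TensorProduct.map σ.toLinearMap LinearMap.id t)
        + TensorProduct.map (toL k A E ι x l) (toR k A E ι x m)
          (TensorProduct.map δ LinearMap.id t) := by
  induction t using TensorProduct.induction_on with
  | zero => simp only [map_zero, add_zero]
  | tmul b c =>
    simp only [TensorProduct.map_tmul, LinearMap.mulLeft_apply, LinearMap.id_apply,
      AlgEquiv.toLinearMap_apply, mul_toL_of_commRule hcomm, TensorProduct.add_tmul]
  | add t u ht hu => simp only [map_add, ht, hu]; abel

theorem map_mulRight_map_toL_toR (hcomm : ∀ a : A, x * ι a = ι (σ a) * x + ι (δ a))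
    (l m : ℕ) (t : A ⊗[k] A) :
    TensorProduct.map LinearMap.id (LinearMap.mulRight k x)
        (TensorProduct.map (toL k A E ι x l) (toR k A E ι x m) t) =
      TensorProduct.map (toL k A E ι x l) (toR k A E ι x (m + 1))
          (TensorProduct.map LinearMap.id σ.symm.toLinearMap t)
        - TensorProduct.map (toL k A E ι x l) (toR k A E ι x m)
          (TensorProduct.map LinearMap.id (δ.comp σ.symm.toLinearMap) t) := by
  induction t using TensorProduct.induction_on with
  | zero => simp only [map_zero, sub_zero]
  | tmul b c =>
    simp only [TensorProduct.map_tmul, LinearMap.mulRight_apply, LinearMap.id_apply,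
      AlgEquiv.toLinearMap_apply, LinearMap.comp_apply, toR_mul_of_commRule hcomm,
      TensorProduct.tmul_sub]
  | add t u ht hu => simp only [map_add, ht, hu]; abel

end CommutationRule

/-- **The key identity for the map `θ`.**  For an Ore extension `E = A[x;σ,δ]` and a
`k`-linear map `f : A^{⊗n} → A ⊗ A`, one has
`θ^n([f, x^l ⊗ x^m]) = [f₁, x^{l+1} ⊗ x^m] − [f₂, x^l ⊗ x^{m+1}] + [f₃, x^l ⊗ x^m]`,
where `θ^n(F)(a) = x ▹ F(σ⁻¹a) − F(a) ◃ x − Σ_j F(a_1, …, δσ⁻¹(a_j), σ⁻¹(a_{j+1}), …)`,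
`f₁ = (σ⊗id)∘f∘(σ⁻¹)^{⊗n}`, `f₂ = (id⊗σ⁻¹)∘f`, and
`f₃ = (δ⊗id)∘f∘(σ⁻¹)^{⊗n} + (id⊗δσ⁻¹)∘f − Σ_j f∘(id^{⊗(j-1)}⊗δσ⁻¹⊗(σ⁻¹)^{⊗(n-j)})`.
Both sides are evaluated on the pure tensors `a₁ ⊗ ⋯ ⊗ aₙ`, which generate `A^{⊗n}`. -/
theorem theta_bracket_identity
    (σ : A ≃ₐ[k] A) (δ : A →ₗ[k] A)
    (hOre : IsOreExtension k A E σ δ ι x)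
    (n : ℕ) (f : TensorPower k n A →ₗ[k] A ⊗[k] A) (l m : ℕ) :
    ∀ a : Fin n → A,
      (TensorProduct.map (LinearMap.mulLeft k x) LinearMap.id)
          ((bracket k A E ι x f l m)
            (PiTensorProduct.tprod k (fun i : Fin n => σ.symm (a i))))
        - (TensorProduct.map LinearMap.id (LinearMap.mulRight k x))
            ((bracket k A E ι x f l m) (PiTensorProduct.tprod k a))
        - ∑ j : Fin n,
            (bracket k A E ι x f l m)
              (PiTensorProduct.tprod k (fun i : Fin n =>
                if (i : ℕ) < (j : ℕ) then a i
                else if i = j then δ (σ.symm (a j))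
                else σ.symm (a i))) =
      (TensorProduct.map (toL k A E ι x (l + 1)) (toR k A E ι x m))
          ((TensorProduct.map σ.toLinearMap LinearMap.id)
            (f (PiTensorProduct.tprod k (fun i : Fin n => σ.symm (a i)))))
        - (TensorProduct.map (toL k A E ι x l) (toR k A E ι x (m + 1)))
            ((TensorProduct.map LinearMap.id σ.symm.toLinearMap)
              (f (PiTensorProduct.tprod k a)))
        + (TensorProduct.map (toL k A E ι x l) (toR k A E ι x m))
            ((TensorProduct.map δ LinearMap.id)
                (f (PiTensorProduct.tprod k (fun i : Fin n => σ.symm (a i))))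
              + (TensorProduct.map LinearMap.id (δ.comp σ.symm.toLinearMap))
                  (f (PiTensorProduct.tprod k a))
              - ∑ j : Fin n,
                  f (PiTensorProduct.tprod k (fun i : Fin n =>
                    if (i : ℕ) < (j : ℕ) then a i
                    else if i = j then δ (σ.symm (a j))
                    else σ.symm (a i)))) := by
  intro a
  simp only [bracket, LinearMap.comp_apply, map_mulLeft_map_toL_toR hOre.commRule,
    map_mulRight_map_toL_toR hOre.commRule, map_add, map_sub, map_sum]
  abel

end Stmt5
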